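/- Let G be a finite nilpotent group of order n = p_1^{α_1} ··· p_r^{α_r} with distinct primes p_1 < ··· < p_r, let P_i denote the unique Sylow p_i-subgroup, and for x ∈ G write x = x_1 ··· x_r with x_i ∈ P_i. For x ∈ G \ {e}, with τ_x = { j ∈ [r] : x_j ≠ e }, the degree of x in the power graph P(G) equals deg(x) = o(x) − φ(o(x)) + (∏_{j ∈ [r] \ τ_x} p_j^{α_j}) · |{ y ∈ ∏_{i ∈ τ_x} P_i : x ∈ ⟨y⟩ }| − 1. -/

import Mathlib

/-!
In any finite group the neighbours of `x` in the power graph are the elements of `⟨x⟩` and the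
`y` with `x ∈ ⟨y⟩`, apart from `x` itself; the two sets meet exactly in the `φ (o x)` generators
of `⟨x⟩`, so `deg x = o x - φ (o x) + #{y | x ∈ ⟨y⟩} - 1`. A finite nilpotent group is the
internal direct product of its Sylow subgroups, and since these have coprime orders, `x ∈ ⟨y⟩`
holds iff `x_i ∈ ⟨y_i⟩` for every `i`. The count therefore splits over the coordinates, and a
coordinate with `x_i = 1` leaves `y_i` free, contributing the factor `|P_i| = p_i ^ α_i`.
-/

/-- The power graph of a group: distinct `x` and `y` are adjacent iff one is a
positive power of the other. -/
def powerGraph (G : Type*) [Group G] : SimpleGraph G where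
  Adj x y := x ≠ y ∧ ((∃ k : ℕ, 0 < k ∧ x = y ^ k) ∨ (∃ k : ℕ, 0 < k ∧ y = x ^ k))
  symm := by
    constructor
    intro x y h
    exact ⟨h.1.symm, h.2.symm⟩
  loopless := by
    constructor
    intro x h
    exact h.1 rfl

noncomputable instance powerGraphDecidableAdj (G : Type*) [Group G] :
    DecidableRel (powerGraph G).Adj :=
  Classical.decRel _

/-- The vertex connectivity of a finite graph: the minimum number of vertices whose
deletion yields a disconnected graph or a graph with exactly one vertex. -/
noncomputable def vertexConnectivity {V : Type*} [Fintype V] (Γ : SimpleGraph V) : ℕ :=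
  sInf {n | ∃ S : Finset V, S.card = n ∧
    (¬ (SimpleGraph.induce ((↑S : Set V)ᶜ) Γ).Preconnected ∨ ((↑S : Set V)ᶜ).ncard = 1)}

/-- A subgroup is a maximal cyclic subgroup if it is cyclic and not properly contained
in any cyclic subgroup. -/
def IsMaximalCyclic {G : Type*} [Group G] (M : Subgroup G) : Prop :=
  IsCyclic ↥M ∧ ∀ N : Subgroup G, IsCyclic ↥N → M ≤ N → M = N

/-- `K` is a maximal cyclic subgroup of the subgroup `H`. -/
def IsMaximalCyclicIn {G : Type*} [Group G] (H K : Subgroup G) : Prop :=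
  IsCyclic ↥K ∧ K ≤ H ∧ ∀ N : Subgroup G, IsCyclic ↥N → N ≤ H → K ≤ N → K = N

/-- A generalized quaternion group: a dicyclic group `Q_{4n}` with `n ≥ 2` a power of 2. -/
def IsGeneralizedQuaternion (G : Type*) [Group G] : Prop :=
  ∃ n : ℕ, 2 ≤ n ∧ (∃ k : ℕ, n = 2 ^ k) ∧ Nonempty (G ≃* QuaternionGroup n)

open Function Subgroup

section PowerGraph

variable {G : Type*} [Group G]

theorem exists_pos_pow_eq_iff_mem_zpowers [Finite G] {x y : G} :
    (∃ k : ℕ, 0 < k ∧ x = y ^ k) ↔ x ∈ zpowers y := by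
  refine ⟨fun ⟨k, _, hk⟩ => hk ▸ npow_mem_zpowers y k, fun h => ?_⟩
  obtain ⟨k, rfl⟩ := mem_powers_iff_mem_zpowers.mpr h
  exact ⟨k + orderOf y, Nat.lt_add_left _ (orderOf_pos y),
    by rw [pow_add, pow_orderOf_eq_one, mul_one]⟩

theorem powerGraph_adj_iff [Finite G] {x y : G} :
    (powerGraph G).Adj x y ↔ x ≠ y ∧ (x ∈ zpowers y ∨ y ∈ zpowers x) := by
  simp only [powerGraph, exists_pos_pow_eq_iff_mem_zpowers]

theorem zpowers_eq_zpowers_iff_mem_and_orderOf_eq [Finite G] {x y : G} :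
    zpowers y = zpowers x ↔ y ∈ zpowers x ∧ orderOf y = orderOf x := by
  refine ⟨fun h => ⟨h ▸ mem_zpowers y, by rw [← Nat.card_zpowers, h, Nat.card_zpowers]⟩,
    fun ⟨hy, hord⟩ => ?_⟩
  exact eq_of_le_of_card_ge (zpowers_le.mpr hy) (by rw [Nat.card_zpowers, Nat.card_zpowers, hord])

theorem card_zpowers_eq_zpowers [Finite G] (x : G) :
    Nat.card {y : G // zpowers y = zpowers x} = Nat.totient (orderOf x) := by
  classical
  have := Fintype.ofFinite (zpowers x)
  let e : {y : G // zpowers y = zpowers x} ≃ {z : zpowers x // orderOf z = orderOf x} :=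
    (Equiv.subtypeEquivRight fun y => zpowers_eq_zpowers_iff_mem_and_orderOf_eq).trans
      ((Equiv.subtypeSubtypeEquivSubtypeInter (· ∈ zpowers x) _).symm.trans
        (Equiv.subtypeEquivRight fun z => by rw [orderOf_coe]))
  rw [Nat.card_congr e, Nat.card_eq_fintype_card, Fintype.card_subtype]
  exact IsCyclic.card_orderOf_eq_totient (by rw [← Nat.card_eq_fintype_card, Nat.card_zpowers])

open Finset in
theorem degree_powerGraph_add_totient [Fintype G] [DecidableRel (powerGraph G).Adj] (x : G) :
    (powerGraph G).degree x + 1 + Nat.totient (orderOf x) =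
      orderOf x + Nat.card {y : G // x ∈ zpowers y} := by
  classical
  set S : Finset G := {y | y ∈ zpowers x}
  set A : Finset G := {y | x ∈ zpowers y}
  have hnbr : (powerGraph G).neighborFinset x = (S ∪ A).erase x := by
    ext y
    simp [S, A, powerGraph_adj_iff, eq_comm, or_comm]
  have hSA : S ∩ A = ({y | zpowers y = zpowers x} : Finset G) := by
    ext y
    simp [S, A, le_antisymm_iff, zpowers_le]
  have hx : x ∈ S ∪ A := by simp [S, mem_zpowers]
  have hS : #S = orderOf x := by
    rw [← Nat.card_zpowers, Nat.card_eq_fintype_card, ← Fintype.card_subtype]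
  have hA : #A = Nat.card {y : G // x ∈ zpowers y} := by
    rw [Nat.card_eq_fintype_card, Fintype.card_subtype]
  have hφ : #(S ∩ A) = Nat.totient (orderOf x) := by
    rw [hSA, ← card_zpowers_eq_zpowers, Nat.card_eq_fintype_card, Fintype.card_subtype]
  rw [SimpleGraph.degree, hnbr, card_erase_add_one hx, ← hφ, card_union_add_card_inter, hS, hA]

end PowerGraph

section Pi

variable {ι : Type*} [Fintype ι] {f : ι → Type*}

theorem orderOf_pi_eq_prod [∀ i, Monoid (f i)] (b : ∀ i, f i)
    (hb : Pairwise (Nat.Coprime on fun i => orderOf (b i))) :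
    orderOf b = ∏ i, orderOf (b i) := by
  rw [← Finset.lcm_eq_prod (hb.set_pairwise _)]
  refine Nat.dvd_antisymm (orderOf_dvd_of_pow_eq_one (funext fun i => ?_))
    (Finset.lcm_dvd fun i _ => orderOf_map_dvd (Pi.evalMonoidHom f i) b)
  exact orderOf_dvd_iff_pow_eq_one.mp (Finset.dvd_lcm (Finset.mem_univ i))

theorem Nat.card_subtype_forall_apply (p : ∀ i, f i → Prop) :
    Nat.card {c : ∀ i, f i // ∀ i, p i (c i)} = ∏ i, Nat.card {y : f i // p i y} := by
  rw [← Nat.card_pi]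
  exact Nat.card_congr Equiv.subtypePiEquivPi

variable [∀ i, Group (f i)]

theorem Subgroup.card_pi_univ (H : ∀ i, Subgroup (f i)) :
    Nat.card (pi Set.univ H) = ∏ i, Nat.card (H i) := by
  rw [← Nat.card_pi]
  exact Nat.card_congr (Equiv.Set.univPi fun i => (H i : Set (f i)))

theorem zpowers_pi_eq_pi_zpowers [∀ i, Finite (f i)] (b : ∀ i, f i)
    (hb : Pairwise (Nat.Coprime on fun i => orderOf (b i))) :
    zpowers b = pi Set.univ fun i => zpowers (b i) := by
  refine eq_of_le_of_card_ge
    (zpowers_le.mpr ((mem_pi _).mpr fun i _ => mem_zpowers (b i))) ?_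
  simp only [card_pi_univ, Nat.card_zpowers, orderOf_pi_eq_prod b hb, le_refl]

theorem mem_zpowers_pi_iff [∀ i, Finite (f i)] {a b : ∀ i, f i}
    (hb : Pairwise (Nat.Coprime on fun i => orderOf (b i))) :
    a ∈ zpowers b ↔ ∀ i, a i ∈ zpowers (b i) := by
  simp [zpowers_pi_eq_pi_zpowers b hb, mem_pi]

theorem card_mem_zpowers_eq_ite_mul {H : Type*} [Group H] [Finite H] [DecidableEq H] (a : H) :
    Nat.card {y : H // a ∈ zpowers y} =
      (if a = 1 then Nat.card H else 1) * Nat.card {y : H // a ∈ zpowers y ∧ (a = 1 → y = 1)} := by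
  split_ifs with ha
  · subst ha
    simp
  · simp [ha]

theorem card_mem_zpowers_pi [∀ i, Finite (f i)] [∀ i, DecidableEq (f i)] (a : ∀ i, f i)
    (hf : Pairwise (Nat.Coprime on fun i => Nat.card (f i))) :
    Nat.card {c : ∀ i, f i // a ∈ zpowers c} =
      (∏ i with a i = 1, Nat.card (f i)) *
        Nat.card {c : ∀ i, f i // a ∈ zpowers c ∧ ∀ i, a i = 1 → c i = 1} := by
  have hmem (c : ∀ i, f i) : a ∈ zpowers c ↔ ∀ i, a i ∈ zpowers (c i) :=
    mem_zpowers_pi_iff fun i j hij =>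
      ((hf hij).coprime_dvd_left (orderOf_dvd_natCard _)).coprime_dvd_right (orderOf_dvd_natCard _)
  simp only [hmem, ← forall_and]
  rw [Nat.card_subtype_forall_apply fun i y => a i ∈ zpowers y,
    Nat.card_subtype_forall_apply fun i y => a i ∈ zpowers y ∧ (a i = 1 → y = 1),
    Finset.prod_filter, ← Finset.prod_mul_distrib]
  exact Finset.prod_congr rfl fun i _ => card_mem_zpowers_eq_ite_mul (a i)

end Pi

section Decomposition

variable {G : Type*} [Group G] [Finite G]

theorem Subgroup.normal_of_isPGroup_of_not_dvd_index [Group.IsNilpotent G] {p : ℕ} [Fact p.Prime]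
    {H : Subgroup G} (hH : IsPGroup p H) (hidx : ¬ p ∣ H.index) : H.Normal :=
  inferInstanceAs (hH.toSylow hidx : Subgroup G).Normal

theorem Subgroup.normal_of_card_eq_prime_pow [Group.IsNilpotent G] {ι : Type*} [Fintype ι]
    {p α : ι → ℕ} (hp : ∀ i, (p i).Prime) (hinj : Injective p)
    (hG : Nat.card G = ∏ i, p i ^ α i) {H : Subgroup G} {i : ι} (hH : Nat.card H = p i ^ α i) :
    H.Normal := by
  classical
  have := Fact.mk (hp i)
  have hidx : H.index = ∏ j ∈ Finset.univ.erase i, p j ^ α j := by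
    apply Nat.eq_of_mul_eq_mul_left (pow_pos (hp i).pos (α i))
    rw [← hH, card_mul_index, hG, hH]
    exact (Finset.mul_prod_erase _ (fun j => p j ^ α j) (Finset.mem_univ i)).symm
  refine normal_of_isPGroup_of_not_dvd_index (IsPGroup.of_card hH) ?_
  rw [hidx, ← (hp i).coprime_iff_not_dvd]
  exact Nat.Coprime.prod_right fun j hj => Nat.Coprime.pow_right _
    ((Nat.coprime_primes (hp i) (hp j)).mpr (hinj.ne (Finset.ne_of_mem_erase hj).symm))

theorem exists_mulEquiv_pi_apply_eq_prod_ofFn {r : ℕ} (P : Fin r → Subgroup G)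
    (hcomm : Pairwise fun i j => ∀ x y : G, x ∈ P i → y ∈ P j → Commute x y)
    (hcop : Pairwise (Nat.Coprime on fun i => Nat.card (P i)))
    (hcard : Nat.card G = ∏ i, Nat.card (P i)) :
    ∃ e : (∀ i, P i) ≃* G, ∀ c, e c = (List.ofFn fun i => (c i : G)).prod := by
  have := fun i => Fintype.ofFinite (P i)
  have hinj : Injective (noncommPiCoprod hcomm) :=
    injective_noncommPiCoprod_of_iSupIndep
      (independent_of_coprime_order hcomm (by simpa only [Nat.card_eq_fintype_card] using hcop))
  have hbij : Bijective (noncommPiCoprod hcomm) :=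
    (Nat.bijective_iff_injective_and_card _).mpr ⟨hinj, by rw [Nat.card_pi, hcard]⟩
  exact ⟨MulEquiv.ofBijective _ hbij, fun c => by simp [noncommPiCoprod_apply, Finset.noncommProd]⟩

end Decomposition

theorem MulEquiv.mem_zpowers_iff {H G : Type*} [Group H] [Group G] (e : H ≃* G) {a c : H} :
    e a ∈ zpowers (e c) ↔ a ∈ zpowers c := by
  simp only [Subgroup.mem_zpowers_iff, ← map_zpow, e.apply_eq_iff_eq]

section ProductCoordinates

variable {G : Type*} [Group G] {r : ℕ} {P : Fin r → Subgroup G} {e : (∀ i, P i) ≃* G}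

theorem exists_eq_prod_ofFn_ite_iff (he : ∀ c, e c = (List.ofFn fun i => (c i : G)).prod)
    (s : Fin r → Prop) [DecidablePred s] (c : ∀ i, P i) :
    (∃ yc : Fin r → G, (∀ i, yc i ∈ P i) ∧
      e c = (List.ofFn fun i => if s i then yc i else 1).prod) ↔ ∀ i, ¬ s i → c i = 1 := by
  constructor
  · rintro ⟨yc, hyc, hc⟩ i hi
    have : c = fun i => if s i then ⟨yc i, hyc i⟩ else 1 := by
      apply e.injective
      rw [hc, he]
      congr 2
      funext i
      split_ifs <;> rfl
    simp [this, hi]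
  · refine fun h => ⟨fun i => c i, fun i => (c i).2, ?_⟩
    rw [he]
    congr 2
    funext i
    split_ifs with hi
    · rfl
    · simp [h i hi]

theorem card_mem_zpowers_prod_ofFn [Finite G] [DecidableEq G]
    (he : ∀ c, e c = (List.ofFn fun i => (c i : G)).prod)
    (hcop : Pairwise (Nat.Coprime on fun i => Nat.card (P i)))
    {xc : Fin r → G} (hxc : ∀ i, xc i ∈ P i) :
    Nat.card {y : G // (List.ofFn xc).prod ∈ zpowers y} =
      (∏ j with xc j = 1, Nat.card (P j)) *
        Nat.card {y : G // (∃ yc : Fin r → G, (∀ i, yc i ∈ P i) ∧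
            y = (List.ofFn fun i => if xc i ≠ 1 then yc i else 1).prod) ∧
          (List.ofFn xc).prod ∈ zpowers y} := by
  let a : ∀ i, P i := fun i => ⟨xc i, hxc i⟩
  have ha (i : Fin r) : a i = 1 ↔ xc i = 1 := OneMemClass.coe_eq_one.symm
  rw [show (List.ofFn xc).prod = e a from (he a).symm]
  calc Nat.card {y : G // e a ∈ zpowers y}
      = Nat.card {c : ∀ i, P i // a ∈ zpowers c} :=
        (Nat.card_congr (e.toEquiv.subtypeEquiv fun c => by simp [e.mem_zpowers_iff])).symm
    _ = (∏ i with a i = 1, Nat.card (P i)) *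
        Nat.card {c : ∀ i, P i // a ∈ zpowers c ∧ ∀ i, a i = 1 → c i = 1} :=
        card_mem_zpowers_pi a hcop
    _ = _ := by
      congr 1
      · exact Finset.prod_congr (Finset.filter_congr fun i _ => ha i) fun _ _ => rfl
      · refine Nat.card_congr (e.toEquiv.subtypeEquiv fun c => ?_)
        simp only [MulEquiv.toEquiv_eq_coe, EquivLike.coe_coe, exists_eq_prod_ofFn_ite_iff he,
          e.mem_zpowers_iff, not_not, ha, and_comm]

end ProductCoordinates

open scoped Classical in
theorem degree_formula_nilpotent_general
    {G : Type*} [Group G] [Fintype G] (hnil : Group.IsNilpotent G)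
    (r : ℕ) (p α : Fin r → ℕ) (P : Fin r → Subgroup G)
    (hp : ∀ i, (p i).Prime) (hmono : StrictMono p)
    (hcard : Fintype.card G = ∏ i, p i ^ α i)
    (hP : ∀ i, Nat.card ↥(P i) = p i ^ α i)
    (x : G) (xc : Fin r → G) (hxc : ∀ i, xc i ∈ P i)
    (hxprod : x = (List.ofFn xc).prod) :
    (powerGraph G).degree x =
      orderOf x - Nat.totient (orderOf x) +
        (∏ j ∈ Finset.univ.filter (fun j => xc j = 1), p j ^ α j) *
          Nat.card {y : G //
            (∃ yc : Fin r → G, (∀ i, yc i ∈ P i) ∧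
              y = (List.ofFn (fun i => if xc i ≠ 1 then yc i else 1)).prod) ∧
            x ∈ Subgroup.zpowers y} - 1 := by
  subst hxprod
  have hG : Nat.card G = ∏ i, p i ^ α i := by rw [Nat.card_eq_fintype_card, hcard]
  have hcop : Pairwise (Nat.Coprime on fun i => Nat.card (P i)) := fun i j hij => by
    simp only [onFun, hP]
    exact ((Nat.coprime_primes (hp i) (hp j)).mpr (hmono.injective.ne hij)).pow _ _
  have hnormal (i : Fin r) : (P i).Normal :=
    normal_of_card_eq_prime_pow hp hmono.injective hG (hP i)
  obtain ⟨e, he⟩ := exists_mulEquiv_pi_apply_eq_prod_ofFn P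
    (fun i j hij => commute_of_normal_of_disjoint _ _ (hnormal i) (hnormal j)
      (disjoint_of_coprime_natCard (hcop hij)))
    hcop (by simp only [hG, hP])
  have hdeg := degree_powerGraph_add_totient (List.ofFn xc).prod
  rw [card_mem_zpowers_prod_ofFn he hcop hxc] at hdeg
  simp only [hP] at hdeg
  have := Nat.totient_le (orderOf (List.ofFn xc).prod)
  omega

open scoped Classical in
/-- The degree of a nonidentity vertex `x` of the power graph of a finite nilpotent group. -/
theorem degree_formula_nilpotent
    {G : Type*} [Group G] [Fintype G] (hnil : Group.IsNilpotent G)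
    (r : ℕ) (p α : Fin r → ℕ) (P : Fin r → Subgroup G)
    (hp : ∀ i, (p i).Prime) (hmono : StrictMono p) (hα : ∀ i, 1 ≤ α i)
    (hcard : Fintype.card G = ∏ i, p i ^ α i)
    (hP : ∀ i, Nat.card ↥(P i) = p i ^ α i)
    (x : G) (hx1 : x ≠ 1) (xc : Fin r → G) (hxc : ∀ i, xc i ∈ P i)
    (hxprod : x = (List.ofFn xc).prod) :
    (powerGraph G).degree x =
      orderOf x - Nat.totient (orderOf x) +
        (∏ j ∈ Finset.univ.filter (fun j => xc j = 1), p j ^ α j) *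
          Nat.card {y : G //
            (∃ yc : Fin r → G, (∀ i, yc i ∈ P i) ∧
              y = (List.ofFn (fun i => if xc i ≠ 1 then yc i else 1)).prod) ∧
            x ∈ Subgroup.zpowers y} - 1 :=
  degree_formula_nilpotent_general hnil r p α P hp hmono hcard hP x xc hxc hxprod
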